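/- arXiv:1906.03904 — 4 statements merged into one kernel-verified Lean document; each statement's English description precedes it below -/
import Mathlib

section
/- Let A be a type, R and E binary relations on A, and S a binary relation with R ⊆ S ⊆ ERE. If S is terminating, then S is confluent modulo E if and only if S is both JK-confluent modulo E and JK-coherent modulo E. -/
/-- Reflexive-transitive closure of a relation. -/
def RStar {A : Type*} (T : A → A → Prop) : A → A → Prop :=
  Relation.ReflTransGen T

/-- `S` is confluent modulo `E`. -/
def ConfluentModulo {A : Type*} (S E : A → A → Prop) : Prop :=
  ∀ u v u' v', Relation.EqvGen E u v → RStar S u u' → RStar S v v' →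
    ∃ w w', RStar S u' w ∧ RStar S v' w' ∧ Relation.EqvGen E w w'

/-- Jouannaud–Kirchner confluence of `S` modulo `E`. -/
def JKConfluentModulo {A : Type*} (S E : A → A → Prop) : Prop :=
  ∀ u u' v', RStar S u u' → RStar S u v' →
    ∃ w w', RStar S u' w ∧ RStar S v' w' ∧ Relation.EqvGen E w w'

/-- Jouannaud–Kirchner coherence of `S` modulo `E`. -/
def JKCoherentModulo {A : Type*} (S E : A → A → Prop) : Prop :=
  ∀ u u' v, RStar S u u' → Relation.EqvGen E u v →
    ∃ w w', RStar S u' w ∧ RStar S v w' ∧ Relation.EqvGen E w w'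

/-!
Termination gives every element a normal form. JK-confluence makes any two normal forms of one
element `E`-equivalent, and JK-coherence makes a normal form of `u` `E`-equivalent to some normal
form of any `v ≈_E u`. Hence `E`-equivalent elements have `E`-equivalent normal forms, and
rewriting `u'` and `v'` to normal forms joins them modulo `E`.
-/

section

variable {A : Type*} {S E : A → A → Prop}

def IsNormalForm (S : A → A → Prop) (n : A) : Prop :=
  ∀ x, ¬ S n x

theorem IsNormalForm.eq_of_rStar {n x : A} (hn : IsNormalForm S n) (h : RStar S n x) : x = n := by
  rcases Relation.ReflTransGen.cases_head h with rfl | ⟨y, hny, -⟩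
  · rfl
  · exact (hn y hny).elim

theorem wellFounded_flip_of_not_exists_chain (hterm : ¬ ∃ f : ℕ → A, ∀ n, S (f n) (f (n + 1))) :
    WellFounded (flip S) :=
  wellFounded_iff_isEmpty_descending_chain.2 ⟨fun ⟨f, hf⟩ => hterm ⟨f, hf⟩⟩

theorem exists_normalForm (hwf : WellFounded (flip S)) (u : A) :
    ∃ n, RStar S u n ∧ IsNormalForm S n := by
  obtain ⟨n, hun, hmin⟩ := hwf.has_min {x | RStar S u x} ⟨u, Relation.ReflTransGen.refl⟩
  exact ⟨n, hun, fun x hnx => hmin x (Relation.ReflTransGen.tail hun hnx) hnx⟩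

theorem ConfluentModulo.jkConfluentModulo (h : ConfluentModulo S E) : JKConfluentModulo S E :=
  fun u _ _ hu hv => h u u _ _ (Relation.EqvGen.refl u) hu hv

theorem ConfluentModulo.jkCoherentModulo (h : ConfluentModulo S E) : JKCoherentModulo S E :=
  fun _ _ v hu huv => h _ v _ v huv hu Relation.ReflTransGen.refl

theorem JKConfluentModulo.eqvGen_of_isNormalForm (hconf : JKConfluentModulo S E) {u n m : A}
    (hun : RStar S u n) (hum : RStar S u m) (hn : IsNormalForm S n) (hm : IsNormalForm S m) :
    Relation.EqvGen E n m := by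
  obtain ⟨w, w', hnw, hmw', hww'⟩ := hconf u n m hun hum
  rwa [hn.eq_of_rStar hnw, hm.eq_of_rStar hmw'] at hww'

theorem JKCoherentModulo.eqvGen_of_isNormalForm (hcoh : JKCoherentModulo S E) {x n m : A}
    (hxm : RStar S x m) (hxn : Relation.EqvGen E x n) (hm : IsNormalForm S m)
    (hn : IsNormalForm S n) : Relation.EqvGen E m n := by
  obtain ⟨w, w', hmw, hnw', hww'⟩ := hcoh x m n hxm hxn
  rwa [hm.eq_of_rStar hmw, hn.eq_of_rStar hnw'] at hww'

theorem eqvGen_of_isNormalForm_of_eqvGen (hwf : WellFounded (flip S))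
    (hconf : JKConfluentModulo S E) (hcoh : JKCoherentModulo S E) {u v n m : A}
    (huv : Relation.EqvGen E u v) (hun : RStar S u n) (hvm : RStar S v m)
    (hn : IsNormalForm S n) (hm : IsNormalForm S m) : Relation.EqvGen E n m := by
  obtain ⟨w, w', hnw, hvw', hww'⟩ := hcoh u n v hun huv
  rw [hn.eq_of_rStar hnw] at hww'
  obtain ⟨m', hw'm', hm'⟩ := exists_normalForm hwf w'
  have hm'n : Relation.EqvGen E m' n := hcoh.eqvGen_of_isNormalForm hw'm' hww'.symm hm' hn
  have hm'm : Relation.EqvGen E m' m := hconf.eqvGen_of_isNormalForm (hvw'.trans hw'm') hvm hm' hm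
  exact Relation.EqvGen.trans _ _ _ hm'n.symm hm'm

end

theorem confluentModulo_iff_jkConfluent_and_jkCoherent_general
    {A : Type*} (E S : A → A → Prop)
    (hterm : ¬ ∃ f : ℕ → A, ∀ n, S (f n) (f (n + 1))) :
    ConfluentModulo S E ↔ (JKConfluentModulo S E ∧ JKCoherentModulo S E) := by
  refine ⟨fun h => ⟨h.jkConfluentModulo, h.jkCoherentModulo⟩, fun ⟨hconf, hcoh⟩ => ?_⟩
  have hwf := wellFounded_flip_of_not_exists_chain hterm
  intro u v u' v' huv hu hv
  obtain ⟨n, hu'n, hn⟩ := exists_normalForm hwf u'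
  obtain ⟨m, hv'm, hm⟩ := exists_normalForm hwf v'
  exact ⟨n, m, hu'n, hv'm,
    eqvGen_of_isNormalForm_of_eqvGen hwf hconf hcoh huv (hu.trans hu'n) (hv.trans hv'm) hn hm⟩

/-- For a terminating rewriting system `S` modulo `E` (with `R ⊆ S ⊆ ERE`),
confluence modulo `E` is equivalent to JK-confluence together with JK-coherence modulo `E`. -/
theorem confluentModulo_iff_jkConfluent_and_jkCoherent
    {A : Type*} (R E S : A → A → Prop)
    (hRS : ∀ u v, R u v → S u v)
    (hSE : ∀ u v, S u v → ∃ u' v',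
      Relation.EqvGen E u u' ∧ R u' v' ∧ Relation.EqvGen E v' v)
    (hterm : ¬ ∃ f : ℕ → A, ∀ n, S (f n) (f (n + 1))) :
    ConfluentModulo S E ↔ (JKConfluentModulo S E ∧ JKCoherentModulo S E) :=
  confluentModulo_iff_jkConfluent_and_jkCoherent_general E S hterm
end

section
/- Let A be a type, R and E binary relations on A, and S a binary relation with R ⊆ S ⊆ ERE. If S is terminating, then S is confluent modulo E if and only if S is Church-Rosser modulo E. -/
/-- `S` is Church-Rosser modulo `E` (with respect to the congruence generated by `R ∪ E`). -/
def ChurchRosserModulo {A : Type*} (S R E : A → A → Prop) : Prop :=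
  ∀ u v, Relation.EqvGen (fun a b => R a b ∨ E a b) u v →
    ∃ w w', RStar S u w ∧ RStar S v w' ∧ Relation.EqvGen E w w'

open Relation

namespace RewritingModulo

variable {A : Type*} {S R E : A → A → Prop}

def IsNormalForm (S : A → A → Prop) (n : A) : Prop :=
  ∀ x, ¬ S n x

def JoinableModulo (S E : A → A → Prop) (u v : A) : Prop :=
  ∃ w w', RStar S u w ∧ RStar S v w' ∧ EqvGen E w w'

theorem exists_normalForm (hterm : ¬ ∃ f : ℕ → A, ∀ n, S (f n) (f (n + 1))) (u : A) :
    ∃ n, RStar S u n ∧ IsNormalForm S n := by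
  have hwf : WellFounded (flip S) :=
    wellFounded_iff_isEmpty_descending_chain.mpr ⟨fun ⟨f, hf⟩ => hterm ⟨f, hf⟩⟩
  obtain ⟨n, hun, hmin⟩ := hwf.has_min {x | RStar S u x} ⟨u, ReflTransGen.refl⟩
  exact ⟨n, hun, fun x hnx => hmin x (ReflTransGen.tail hun hnx) hnx⟩

theorem IsNormalForm.eq_of_rStar {n w : A} (hn : IsNormalForm S n) (h : RStar S n w) :
    n = w := by
  rcases ReflTransGen.cases_head h with rfl | ⟨x, hnx, -⟩
  · rfl
  · exact absurd hnx (hn x)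

theorem eqvGen_normalForms_of_confluentModulo (hconf : ConfluentModulo S E) {u v m n : A}
    (huv : EqvGen E u v) (hum : RStar S u m) (hvn : RStar S v n)
    (hm : IsNormalForm S m) (hn : IsNormalForm S n) : EqvGen E m n := by
  obtain ⟨w, w', hmw, hnw', hww'⟩ := hconf u v m n huv hum hvn
  rwa [hm.eq_of_rStar hmw, hn.eq_of_rStar hnw']

theorem equivalence_joinableModulo (hconf : ConfluentModulo S E)
    (hterm : ¬ ∃ f : ℕ → A, ∀ n, S (f n) (f (n + 1))) :
    Equivalence (JoinableModulo S E) where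
  refl u := ⟨u, u, ReflTransGen.refl, ReflTransGen.refl, EqvGen.refl u⟩
  symm := fun ⟨w, w', huw, hvw', hww'⟩ => ⟨w', w, hvw', huw, hww'.symm⟩
  trans := by
    rintro u v w ⟨a, b, hua, hvb, hab⟩ ⟨c, d, hvc, hwd, hcd⟩
    obtain ⟨a', haa', ha'⟩ := exists_normalForm hterm a
    obtain ⟨b', hbb', hb'⟩ := exists_normalForm hterm b
    obtain ⟨c', hcc', hc'⟩ := exists_normalForm hterm c
    obtain ⟨d', hdd', hd'⟩ := exists_normalForm hterm d
    have hab' := eqvGen_normalForms_of_confluentModulo hconf hab haa' hbb' ha' hb'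
    have hbc' := eqvGen_normalForms_of_confluentModulo hconf (EqvGen.refl v)
      (hvb.trans hbb') (hvc.trans hcc') hb' hc'
    have hcd' := eqvGen_normalForms_of_confluentModulo hconf hcd hcc' hdd' hc' hd'
    exact ⟨a', d', hua.trans haa', hwd.trans hdd', (hab'.trans _ _ _ hbc').trans _ _ _ hcd'⟩

theorem churchRosserModulo_of_confluentModulo (hRS : ∀ u v, R u v → S u v)
    (hterm : ¬ ∃ f : ℕ → A, ∀ n, S (f n) (f (n + 1))) (hconf : ConfluentModulo S E) :
    ChurchRosserModulo S R E := by
  intro u v huv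
  refine (equivalence_joinableModulo hconf hterm).eqvGen_iff.mp (EqvGen.mono ?_ u v huv)
  rintro a b (hab | hab)
  · exact ⟨b, b, ReflTransGen.single (hRS a b hab), ReflTransGen.refl, EqvGen.refl b⟩
  · exact ⟨a, b, ReflTransGen.refl, ReflTransGen.refl, EqvGen.rel a b hab⟩

theorem eqvGen_of_rStar (hSE : ∀ u v, S u v → ∃ u' v',
      EqvGen E u u' ∧ R u' v' ∧ EqvGen E v' v) {u v : A} (h : RStar S u v) :
    EqvGen (fun a b => R a b ∨ E a b) u v := by
  have hE : ∀ {x y}, EqvGen E x y → EqvGen (fun a b => R a b ∨ E a b) x y :=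
    fun h => EqvGen.mono (fun _ _ => Or.inr) _ _ h
  refine reflTransGen_le_of_equivalence_of_le (EqvGen.is_equivalence _) (fun a b hab => ?_) u v h
  obtain ⟨a', b', haa', hab', hb'b⟩ := hSE a b hab
  exact ((hE haa').trans _ _ _ (EqvGen.rel _ _ (Or.inl hab'))).trans _ _ _ (hE hb'b)

theorem confluentModulo_of_churchRosserModulo (hSE : ∀ u v, S u v → ∃ u' v',
      EqvGen E u u' ∧ R u' v' ∧ EqvGen E v' v) (hcr : ChurchRosserModulo S R E) :
    ConfluentModulo S E := fun u v u' v' huv huu' hvv' =>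
  hcr u' v' (((eqvGen_of_rStar hSE huu').symm _ _).trans _ _ _
    ((EqvGen.mono (fun _ _ => Or.inr) u v huv).trans _ _ _ (eqvGen_of_rStar hSE hvv')))

end RewritingModulo

/-- For a terminating rewriting system `S` modulo `E` (with `R ⊆ S ⊆ ERE`),
confluence modulo `E` is equivalent to the Church-Rosser property modulo `E`. -/
theorem confluentModulo_iff_churchRosserModulo
    {A : Type*} (R E S : A → A → Prop)
    (hRS : ∀ u v, R u v → S u v)
    (hSE : ∀ u v, S u v → ∃ u' v',
      Relation.EqvGen E u u' ∧ R u' v' ∧ Relation.EqvGen E v' v)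
    (hterm : ¬ ∃ f : ℕ → A, ∀ n, S (f n) (f (n + 1))) :
    ConfluentModulo S E ↔ ChurchRosserModulo S R E :=
  ⟨RewritingModulo.churchRosserModulo_of_confluentModulo hRS hterm,
    RewritingModulo.confluentModulo_of_churchRosserModulo hSE⟩
end

section
/- Let X be a type with a well-founded strict order < and let a, b, c, d, e be words over X. If |a ++ b| ≤_mult |a| + |d| and |d ++ e| ≤_mult |a| + |d|, then |b| + |c| ≤_mult |d| + |a ++ c|. (Here a, b, c, d, e are the label words of the rewriting sequences f₁, f′₁, f₂, g₁, g′₁ in a decreasing confluence diagram modulo of the branching (f₁, e₁, g₁); the hypotheses express that this confluence diagram is decreasing.) -/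
/-!
Split `|a ++ c| = |a| + C` where `|c| = C + C'` and every letter of `C'` lies below some letter
of `|a|`, and likewise `|a ++ b| = |a| + B`, `|b| = B + B'`. Replacing `B' + C'` by `|a|` is a
multiset descent, so `|b| + |c| ≤ (B + C) + |a| = |a ++ b| + C ≤ |a| + |d| + C = |d| + |a ++ c|`.
-/

open Classical in
/-- The lexicographic maximum measure of a word of labels: `|ε| = ∅` and
`|k·w| = {k} + |w'|`, where `w'` is obtained from `w` by deleting every letter
strictly smaller than `k`. -/
noncomputable def lmMeasure {X : Type*} [Preorder X] : List X → Multiset X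
  | [] => 0
  | k :: w => {k} + lmMeasure (w.filter (fun x => decide (¬ x < k)))
termination_by w => w.length
decreasing_by
  simpa using Nat.lt_succ_of_le ((List.length_filter_le _ w.attach).trans_eq List.length_attach)

/-- The Dershowitz–Manna multiset extension of the strict order on `X`. -/
def DMLT {X : Type*} [Preorder X] (M N : Multiset X) : Prop :=
  ∃ M₁ M₂ M₃ : Multiset X, M = M₁ + M₂ ∧ N = M₁ + M₃ ∧ M₃ ≠ 0 ∧
    ∀ x ∈ M₂, ∃ y ∈ M₃, x < y

/-- The reflexive closure of the Dershowitz–Manna multiset extension. -/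
def DMLE {X : Type*} [Preorder X] (M N : Multiset X) : Prop :=
  M = N ∨ DMLT M N

section DershowitzManna

variable {X : Type*} [Preorder X] {M N P : Multiset X}

theorem dmlt_iff_isDershowitzMannaLT : DMLT M N ↔ M.IsDershowitzMannaLT N := by
  simp only [DMLT, Multiset.IsDershowitzMannaLT, Multiset.empty_eq_zero]
  constructor
  · rintro ⟨A, B, C, hM, hN, hC, hlt⟩
    exact ⟨A, B, C, hC, hM, hN, hlt⟩
  · rintro ⟨A, B, C, hC, hM, hN, hlt⟩
    exact ⟨A, B, C, hM, hN, hC, hlt⟩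

theorem DMLE.trans (hMN : DMLE M N) (hNP : DMLE N P) : DMLE M P := by
  rcases hMN with rfl | hMN
  · exact hNP
  rcases hNP with rfl | hNP
  · exact Or.inr hMN
  rw [dmlt_iff_isDershowitzMannaLT] at hMN hNP
  exact Or.inr (dmlt_iff_isDershowitzMannaLT.mpr (hMN.trans hNP))

theorem DMLE.add_right (h : DMLE M N) (K : Multiset X) : DMLE (M + K) (N + K) := by
  rcases h with rfl | ⟨A, B, C, rfl, rfl, hC, hlt⟩
  · exact Or.inl rfl
  exact Or.inr ⟨A + K, B, C, add_right_comm _ _ _, add_right_comm _ _ _, hC, hlt⟩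

theorem dmle_add_add_of_forall_exists_lt {S T : Multiset X} (h : ∀ x ∈ S, ∃ y ∈ T, x < y)
    (K : Multiset X) : DMLE (K + S) (K + T) := by
  rcases eq_or_ne T 0 with rfl | hT
  · obtain rfl : S = 0 := Multiset.eq_zero_of_forall_notMem fun x hx => by simpa using h x hx
    exact Or.inl rfl
  · exact Or.inr ⟨K, S, T, rfl, rfl, hT, h⟩

end DershowitzManna

section LexicographicMaximumMeasure

open Classical

variable {X : Type*} [Preorder X]

theorem lmMeasure_cons (k : X) (w : List X) :
    lmMeasure (k :: w) = k ::ₘ lmMeasure (w.filter fun x => decide (¬ x < k)) := by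
  rw [lmMeasure, Multiset.singleton_add]

theorem exists_lmMeasure_eq_filter_add (k : X) : ∀ v : List X,
    ∃ T, lmMeasure v = lmMeasure (v.filter fun x => decide (¬ x < k)) + T ∧ ∀ x ∈ T, x < k
  | [] => ⟨0, by simp, by simp⟩
  | j :: v => by
    obtain ⟨T, hT, hTk⟩ := exists_lmMeasure_eq_filter_add k (v.filter fun x => decide (¬ x < j))
    by_cases hjk : j < k
    · have hfilter : ((v.filter fun x => decide (¬ x < j)).filter fun x => decide (¬ x < k)) =
          v.filter fun x => decide (¬ x < k) := by
        rw [List.filter_filter]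
        refine List.filter_congr fun x _ => ?_
        by_cases hxk : x < k
        · simp [hxk]
        · simp [hxk, show ¬ x < j from fun hxj => hxk (hxj.trans hjk)]
      refine ⟨j ::ₘ T, ?_, ?_⟩
      · rw [lmMeasure_cons, hT, hfilter, List.filter_cons_of_neg (by simpa using hjk)]
        simp [Multiset.add_cons]
      · simpa [hjk] using hTk
    · have hfilter : ((v.filter fun x => decide (¬ x < j)).filter fun x => decide (¬ x < k)) =
          (v.filter fun x => decide (¬ x < k)).filter fun x => decide (¬ x < j) := by
        simp only [List.filter_filter, Bool.and_comm]
      refine ⟨T, ?_, hTk⟩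
      rw [lmMeasure_cons, hT, hfilter, List.filter_cons_of_pos (by simpa using hjk),
        lmMeasure_cons, Multiset.cons_add]
termination_by v => v.length
decreasing_by simpa using Nat.lt_succ_of_le (List.length_filter_le _ _)

/-- `R` is the part of `|v|` that survives the deletions caused by the letters of `u`. -/
theorem exists_lmMeasure_append : ∀ u v : List X, ∃ R S, lmMeasure (u ++ v) = lmMeasure u + R ∧
    lmMeasure v = R + S ∧ ∀ x ∈ S, ∃ y ∈ lmMeasure u, x < y
  | [], v => ⟨lmMeasure v, 0, by simp [lmMeasure], by simp, by simp⟩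
  | k :: u, v => by
    obtain ⟨R, S, happend, hv, hS⟩ := exists_lmMeasure_append
      (u.filter fun x => decide (¬ x < k)) (v.filter fun x => decide (¬ x < k))
    obtain ⟨T, hT, hTk⟩ := exists_lmMeasure_eq_filter_add k v
    refine ⟨R, S + T, ?_, by rw [hT, hv, add_assoc], ?_⟩
    · rw [List.cons_append, lmMeasure_cons, List.filter_append, happend, lmMeasure_cons,
        Multiset.cons_add]
    · intro x hx
      rw [lmMeasure_cons]
      rcases Multiset.mem_add.mp hx with hxS | hxT
      · obtain ⟨y, hy, hxy⟩ := hS x hxS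
        exact ⟨y, Multiset.mem_cons_of_mem hy, hxy⟩
      · exact ⟨k, Multiset.mem_cons_self k _, hTk x hxT⟩
termination_by u => u.length
decreasing_by simpa using Nat.lt_succ_of_le (List.length_filter_le _ _)

end LexicographicMaximumMeasure

theorem pasting_property_one_general
    {X : Type*} [Preorder X]
    (a b c d : List X)
    (h1 : DMLE (lmMeasure (a ++ b)) (lmMeasure a + lmMeasure d)) :
    DMLE (lmMeasure b + lmMeasure c) (lmMeasure d + lmMeasure (a ++ c)) := by
  obtain ⟨B, B', hab, hb, hB'⟩ := exists_lmMeasure_append a b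
  obtain ⟨C, C', hac, hc, hC'⟩ := exists_lmMeasure_append a c
  have hbc : DMLE (lmMeasure b + lmMeasure c) (B + C + lmMeasure a) := by
    rw [hb, hc, add_add_add_comm]
    refine dmle_add_add_of_forall_exists_lt (fun x hx => ?_) (B + C)
    rcases Multiset.mem_add.mp hx with hxB | hxC
    exacts [hB' x hxB, hC' x hxC]
  have habc : DMLE (B + C + lmMeasure a) (lmMeasure d + lmMeasure (a ++ c)) := by
    convert h1.add_right C using 1
    · rw [hab]; abel
    · rw [hac]; abel
  exact hbc.trans habc

/-- Pasting property for label words of a decreasing confluence diagram modulo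
(Lemma 2.3.7): if `|a ++ b| ≤_mult |a| + |d|` and `|d ++ e| ≤_mult |a| + |d|`,
then `|b| + |c| ≤_mult |d| + |a ++ c|`. -/
theorem pasting_property_one
    {X : Type*} [Preorder X]
    (hwf : WellFounded ((· < ·) : X → X → Prop))
    (a b c d e : List X)
    (h1 : DMLE (lmMeasure (a ++ b)) (lmMeasure a + lmMeasure d))
    (h2 : DMLE (lmMeasure (d ++ e)) (lmMeasure a + lmMeasure d)) :
    DMLE (lmMeasure b + lmMeasure c) (lmMeasure d + lmMeasure (a ++ c)) :=
  pasting_property_one_general a b c d h1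
end

section
/- Let → be a binary relation on a type A that is quasi-terminating: every infinite sequence (u_n) with u_n → u_{n+1} for all n contains some element occurring infinitely often. Then every element of A reduces by →* to a quasi-normal form, i.e. for every u there exists v with u →* v such that for every w with v → w one has w →* v. -/
/-- A relation `r` is quasi-terminating if every infinite rewriting sequence
contains some element occurring infinitely often. -/
def QuasiTerminating {A : Type*} (r : A → A → Prop) : Prop :=
  ∀ f : ℕ → A, (∀ n, r (f n) (f (n + 1))) → ∃ a, ∀ N, ∃ n, N ≤ n ∧ f n = a

/-- An element `v` is a quasi-normal form for `r` if every one-step reduct of `v`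
reduces back to `v`. -/
def QuasiNormalForm {A : Type*} (r : A → A → Prop) (v : A) : Prop :=
  ∀ w, r v w → Relation.ReflTransGen r w v

/-!
Call an `r`-step `v → w` irreversible when `w` does not reduce back to `v`; a quasi-normal
form is an element admitting no irreversible step. In an infinite chain of irreversible steps
no element recurs, since a later occurrence of an element would let the step leaving its first
occurrence be reversed. So quasi-termination makes the converse of irreversible steps
well-founded, and a minimal reduct of `u` is a quasi-normal form.
-/

open Relation

section

variable {A : Type*} {r : A → A → Prop}

def IrreversibleStep (r : A → A → Prop) (v w : A) : Prop :=
  r v w ∧ ¬ ReflTransGen r w v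

theorem reflTransGen_of_forall_rel_succ {f : ℕ → A} (hf : ∀ n, r (f n) (f (n + 1)))
    {m n : ℕ} (hmn : m ≤ n) : ReflTransGen r (f m) (f n) := by
  induction n, hmn using Nat.le_induction with
  | base => exact .refl
  | succ n _ ih => exact ih.tail (hf n)

theorem QuasiTerminating.wellFounded_flip_irreversibleStep (hqt : QuasiTerminating r) :
    WellFounded (flip (IrreversibleStep r)) := by
  rw [wellFounded_iff_isEmpty_descending_chain]
  refine ⟨fun ⟨f, hf⟩ => ?_⟩
  obtain ⟨a, hinf⟩ := hqt f fun n => (hf n).1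
  obtain ⟨m, -, hm⟩ := hinf 0
  obtain ⟨n, hmn, hn⟩ := hinf (m + 1)
  have hback : ReflTransGen r (f (m + 1)) (f m) := by
    simpa only [hn, hm] using reflTransGen_of_forall_rel_succ (fun k => (hf k).1) hmn
  exact (hf m).2 hback

end

/-- Every element of a quasi-terminating rewriting system reduces to a
quasi-normal form. -/
theorem exists_quasiNormalForm_of_quasiTerminating
    {A : Type*} (r : A → A → Prop) (hqt : QuasiTerminating r) :
    ∀ u, ∃ v, Relation.ReflTransGen r u v ∧ QuasiNormalForm r v := by
  intro u
  obtain ⟨v, huv, hmin⟩ :=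
    hqt.wellFounded_flip_irreversibleStep.has_min {v | ReflTransGen r u v} ⟨u, .refl⟩
  refine ⟨v, huv, fun w hvw => ?_⟩
  by_contra hwv
  exact hmin w (huv.tail hvw) ⟨hvw, hwv⟩
end
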